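/- arXiv:1912.10524 — 4 statements merged into one kernel-verified Lean document; each statement's English description precedes it below -/
import Mathlib

section
/- Let G be a finitely generated group fitting in a short exact sequence 1 → K → G → Γ → 1 with K finitely generated, and suppose b₁(G) > b₁(Γ) > 0 (where b₁ denotes the first Betti number, i.e. the rank of the abelianization). Then G algebraically fibers: there exists a surjective group homomorphism φ: G → ℤ whose kernel is finitely generated. -/
/-!
Write `N = ker f`. Since `b₁(Γ) > 0` there is a character `ψ : Γ → ℤ` taking the value `1` at
some `f s`, and since `b₁(G) > b₁(Γ)` there is a character `θ : G → ℤ` that does not vanish on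
`N`. Pick `τ ∈ N` with `θ(N) = ⟨θ τ⟩`; then `N ∩ ker θ` is generated by the `τ`-conjugates of a
finite set `Q`. Conjugating `Q` and `τ` by `s^{±1}` lands in the subgroup generated by the
conjugates `τ^m Q τ^{-m}` with `|m| ≤ R` for some `R`. For the character `χ = θ + M ψ f` with
`χ(s) = (R + 1) θ(τ)` the element `ω = τ^{-(R+1)} s` lies in `ker χ`, and conjugation by `ω`
shifts the window of conjugates of `Q` far enough that finitely many conjugates of `Q` and of `ω`
generate all of `N ∩ ker χ`. As `ker χ` maps onto a finite-index subgroup of `Γ`, it is finitely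
generated; rescaling `χ` to be surjective gives the fibration.
-/

universe u

/-- First Betti number of a group: the torsion-free rank of its abelianization,
equivalently the dimension of `H₁(G;ℝ)`. -/
noncomputable def b1 (G : Type*) [Group G] : Cardinal :=
  Module.rank ℤ (Additive (Abelianization G))

open Subgroup Set Filter

theorem Module.exists_dual_ne_zero_of_notMem_torsion {R M : Type*} [CommRing R] [IsDomain R]
    [IsPrincipalIdealRing R] [AddCommGroup M] [Module R M] [Module.Finite R M] {x : M}
    (hx : x ∉ Submodule.torsion R M) : ∃ φ : Module.Dual R M, φ x ≠ 0 := by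
  have hx' : (Submodule.torsion R M).mkQ x ≠ 0 := by
    rwa [Submodule.mkQ_apply, Ne, Submodule.Quotient.mk_eq_zero]
  have : Module.Free R (M ⧸ Submodule.torsion R M) := Module.free_of_finite_type_torsion_free'
  obtain ⟨φ, hφ⟩ := Module.Projective.exists_dual_ne_zero R hx'
  exact ⟨φ ∘ₗ (Submodule.torsion R M).mkQ, hφ⟩

theorem LinearMap.rank_le_of_ker_le_torsion {R : Type*} {M N : Type u} [CommRing R] [IsDomain R]
    [AddCommGroup M] [Module R M] [AddCommGroup N] [Module R N] (f : M →ₗ[R] N)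
    (hf : LinearMap.ker f ≤ Submodule.torsion R M) : Module.rank R M ≤ Module.rank R N := by
  have hker : Module.rank R (LinearMap.ker f) = 0 := by
    refine rank_eq_zero_iff.mpr fun ⟨x, hx⟩ => ?_
    obtain ⟨a, ha⟩ := (Submodule.mem_torsion_iff x).mp (hf hx)
    exact ⟨a, nonZeroDivisors.coe_ne_zero a, Subtype.ext ha⟩
  rw [← f.rank_range_add_rank_ker, hker, add_zero]
  exact Submodule.rank_le _

theorem Subgroup.finiteIndex_of_ne_bot_int {H : Subgroup (Multiplicative ℤ)} (hH : H ≠ ⊥) :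
    H.FiniteIndex := by
  obtain ⟨a, ha⟩ := Int.subgroup_cyclic (Subgroup.toAddSubgroup' H)
  have hHa : H = AddSubgroup.toSubgroup (AddSubgroup.zmultiples a) := by
    rw [AddSubgroup.zmultiples_eq_closure, ← ha]
    rfl
  have ha0 : a ≠ 0 := by
    rintro rfl
    exact hH (by rw [hHa, AddSubgroup.zmultiples_zero_eq_bot]; rfl)
  rw [finiteIndex_iff, hHa, AddSubgroup.index_toSubgroup, Int.index_zmultiples]
  exact Int.natAbs_ne_zero.mpr ha0

section Characters

variable {G Γ : Type*} [Group G] [Group Γ]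

theorem Abelianization.exists_mem_ker_of_map_eq_one {f : G →* Γ} (hf : Function.Surjective f)
    {x : Abelianization G} (hx : map f x = 1) : ∃ k ∈ f.ker, of k = x := by
  obtain ⟨w, rfl⟩ : ∃ w, of w = x := QuotientGroup.mk'_surjective _ x
  rw [map_of, ← MonoidHom.mem_ker, ker_of] at hx
  obtain ⟨c, hc, hfc⟩ : f w ∈ (commutator G).map f := by
    rwa [commutator_def, map_commutator, map_top_of_surjective f hf, ← commutator_def]
  refine ⟨w * c⁻¹, by simp [hfc], ?_⟩
  rw [map_mul, map_inv, MonoidHom.mem_ker.mp ((ker_of (G := G)).ge hc), inv_one, mul_one]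

theorem Subgroup.fg_of_fg_map_of_inf_ker_le {H B : Subgroup G} (f : G →* Γ)
    (hmap : (H.map f).FG) (hB : B.FG) (hBH : B ≤ H) (hker : H ⊓ f.ker ≤ B) : H.FG := by
  obtain ⟨T, hT, hTfin⟩ := (fg_iff _).mp hmap
  obtain ⟨V, hVH, hVfin, rfl⟩ := exists_subset_image_finite_and.mp
    ⟨T, (coe_map f H) ▸ hT ▸ subset_closure, hTfin, rfl⟩
  obtain ⟨U, rfl, hUfin⟩ := (fg_iff _).mp hB
  refine (fg_iff _).mpr ⟨V ∪ U, le_antisymm ?_ ?_, hVfin.union hUfin⟩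
  · exact (closure_le H).mpr (union_subset hVH (subset_closure.trans hBH))
  · intro x hx
    obtain ⟨v, hv, hvx⟩ : f x ∈ (closure V).map f := by
      rw [MonoidHom.map_closure, hT]
      exact mem_map_of_mem f hx
    have hvH : v ∈ H := (closure_le H).mpr hVH hv
    have hxv : x * v⁻¹ ∈ closure U := hker (mem_inf.mpr ⟨mul_mem hx (inv_mem hvH), by simp [hvx]⟩)
    rw [← inv_mul_cancel_right x v]
    exact mul_mem (closure_mono subset_union_right hxv) (closure_mono subset_union_left hv)

theorem exists_character_ne_one [Group.FG G] {g : G}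
    (hg : Additive.ofMul (Abelianization.of g) ∉
      Submodule.torsion ℤ (Additive (Abelianization G))) :
    ∃ χ : G →* Multiplicative ℤ, χ g ≠ 1 := by
  have : Group.FG (Abelianization G) := Group.fg_of_surjective (QuotientGroup.mk'_surjective _)
  have : Module.Finite ℤ (Additive (Abelianization G)) :=
    Module.Finite.iff_addGroup_fg.mpr inferInstance
  obtain ⟨φ, hφ⟩ := Module.exists_dual_ne_zero_of_notMem_torsion hg
  exact ⟨(AddMonoidHom.toMultiplicativeRight φ.toAddMonoidHom).comp Abelianization.of, by simpa⟩

theorem MonoidHom.exists_surjective_ker_eq (χ : G →* Multiplicative ℤ) (hχ : χ ≠ 1) :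
    ∃ φ : G →* Multiplicative ℤ, Function.Surjective φ ∧ φ.ker = χ.ker := by
  have := Subgroup.finiteIndex_of_ne_bot_int (mt MonoidHom.range_eq_bot_iff.mp hχ)
  have : Infinite χ.range := by
    rw [← not_finite_iff_infinite]
    intro h
    have := (Subgroup.finite_iff_finite_and_finiteIndex _).mpr ⟨h, this⟩
    exact not_finite (Multiplicative ℤ)
  let e : χ.range ≃* Multiplicative ℤ := intCyclicMulEquiv.symm
  refine ⟨e.toMonoidHom.comp χ.rangeRestrict, e.surjective.comp χ.rangeRestrict_surjective, ?_⟩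
  rw [MonoidHom.ker_comp_of_injective _ _ e.injective, MonoidHom.ker_rangeRestrict]

theorem b1_le_of_ker_le_ker {G Γ : Type u} [Group G] [Group Γ] [Group.FG G] {f : G →* Γ}
    (hf : Function.Surjective f) (h : ∀ χ : G →* Multiplicative ℤ, f.ker ≤ χ.ker) :
    b1 G ≤ b1 Γ := by
  refine (Abelianization.map f).toAdditive.toIntLinearMap.rank_le_of_ker_le_torsion fun x hx => ?_
  obtain ⟨k, hk, rfl⟩ := Abelianization.exists_mem_ker_of_map_eq_one hf (x := x.toMul) hx
  by_contra hk'
  obtain ⟨χ, hχ⟩ := exists_character_ne_one hk'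
  exact hχ (h χ hk)

theorem exists_surjective_character_of_b1_pos [Group.FG G] (h : 0 < b1 G) :
    ∃ ψ : G →* Multiplicative ℤ, Function.Surjective ψ := by
  obtain ⟨x, hx⟩ : ∃ x : Additive (Abelianization G), x ∉ Submodule.torsion ℤ _ := by
    by_contra! hall
    refine h.ne' (rank_eq_zero_iff.mpr fun x => ?_)
    obtain ⟨a, ha⟩ := (Submodule.mem_torsion_iff x).mp (hall x)
    exact ⟨a, nonZeroDivisors.coe_ne_zero a, ha⟩
  obtain ⟨g, rfl⟩ : ∃ g, Additive.ofMul (Abelianization.of g) = x :=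
    QuotientGroup.mk'_surjective _ x.toMul
  obtain ⟨χ, hχ⟩ := exists_character_ne_one hx
  obtain ⟨ψ, hψ, -⟩ := χ.exists_surjective_ker_eq fun h1 => hχ (by rw [h1]; rfl)
  exact ⟨ψ, hψ⟩

theorem exists_character_eqOn_apply_eq {N : Subgroup G} {ψ : G →* Multiplicative ℤ}
    (hψ : N ≤ ψ.ker) {s : G} (hs : ψ s = Multiplicative.ofAdd 1) (θ : G →* Multiplicative ℤ)
    (t : Multiplicative ℤ) : ∃ χ : G →* Multiplicative ℤ, (∀ x ∈ N, χ x = θ x) ∧ χ s = t :=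
  ⟨ψ ^ Multiplicative.toAdd (t / θ s) * θ, fun x hx => by simp [MonoidHom.mem_ker.mp (hψ hx)],
    by simp [hs, ← Int.ofAdd_mul]⟩

theorem finiteIndex_map_ker {f : G →* Γ} (hf : Function.Surjective f)
    {χ : G →* Multiplicative ℤ} (hχ : f.ker.map χ ≠ ⊥) : (χ.ker.map f).FiniteIndex := by
  have := finiteIndex_of_ne_bot_int hχ
  rw [finiteIndex_iff, index_map, f.range_eq_top.mpr hf, index_top, mul_one, sup_comm,
    ← comap_map_eq, index_comap]
  exact isFiniteRelIndex_of_finiteIndex.relIndex_ne_zero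

theorem fg_ker_of_inf_ker_le [Group.FG Γ] {f : G →* Γ} (hf : Function.Surjective f)
    {χ : G →* Multiplicative ℤ} (hχ : f.ker.map χ ≠ ⊥) {B : Subgroup G} (hB : B.FG)
    (hBχ : B ≤ χ.ker) (hNB : f.ker ⊓ χ.ker ≤ B) : χ.ker.FG := by
  have := finiteIndex_map_ker hf hχ
  exact fg_of_fg_map_of_inf_ker_le f ((Group.fg_iff_subgroup_fg _).mp (fg_of_index_ne_zero _))
    hB hBχ (inf_comm f.ker χ.ker ▸ hNB)

end Characters

section Conjugates

variable {G : Type*} [Group G]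

def conjugatesBy (τ : G) (I : Set ℤ) (Q : Set G) : Set G :=
  image2 (fun m q => τ ^ m * q * τ ^ (-m)) I Q

variable {τ s : G} {Q : Set G} {H : Subgroup G} {R : ℕ}

theorem conjugatesBy_mono {I J : Set ℤ} (h : I ⊆ J) : conjugatesBy τ I Q ⊆ conjugatesBy τ J Q :=
  image2_subset_right h

theorem conjugatesBy_finite {I : Set ℤ} (hI : I.Finite) (hQ : Q.Finite) :
    (conjugatesBy τ I Q).Finite :=
  hI.image2 _ hQ

theorem conjugatesBy_subset_of_normal {I : Set ℤ} [H.Normal] (hQ : Q ⊆ H) :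
    conjugatesBy τ I Q ⊆ H := by
  rintro _ ⟨m, -, q, hq, rfl⟩
  simpa [zpow_neg] using ‹H.Normal›.conj_mem q (hQ hq) (τ ^ m)

theorem zpow_mul_mul_zpow_neg_mem_of_mem_closure {I J : Set ℤ} {k : ℤ}
    (hIJ : ∀ m ∈ I, m + k ∈ J) {x : G} (hx : x ∈ closure (conjugatesBy τ I Q))
    (hH : conjugatesBy τ J Q ⊆ H) : τ ^ k * x * τ ^ (-k) ∈ H := by
  induction hx using closure_induction with
  | mem y hy =>
    obtain ⟨m, hm, q, hq, rfl⟩ := hy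
    exact hH ⟨m + k, hIJ m hm, q, hq, by group⟩
  | one => simp
  | mul y z _ _ hy hz => convert mul_mem hy hz using 1; group
  | inv y _ hy => convert inv_mem hy using 1; group

theorem zpow_mul_mul_zpow_neg_mem_of_mem_closure_Icc {k : ℤ} {x : G}
    (hx : x ∈ closure (conjugatesBy τ (Icc (-(R : ℤ)) R) Q))
    (hH : conjugatesBy τ (Icc (k - R) (k + R)) Q ⊆ H) : τ ^ k * x * τ ^ (-k) ∈ H :=
  zpow_mul_mul_zpow_neg_mem_of_mem_closure (J := Icc (k - R) (k + R))
    (fun _ hm => ⟨by linarith [hm.1], by linarith [hm.2]⟩) hx hH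

theorem eventually_mem_closure_conjugatesBy_Icc {x : G}
    (hx : x ∈ closure (conjugatesBy τ univ Q)) :
    ∀ᶠ R : ℕ in atTop, x ∈ closure (conjugatesBy τ (Icc (-(R : ℤ)) R) Q) := by
  have hunion : conjugatesBy τ univ Q = ⋃ R : ℕ, conjugatesBy τ (Icc (-(R : ℤ)) R) Q := by
    have hcover : (⋃ R : ℕ, Icc (-(R : ℤ)) R) = univ :=
      iUnion_eq_univ_iff.mpr fun m => ⟨m.natAbs, mem_Icc.mpr ⟨by omega, by omega⟩⟩
    rw [conjugatesBy, ← hcover, image2_iUnion_left]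
    rfl
  have hmono : Monotone fun R : ℕ => closure (conjugatesBy τ (Icc (-(R : ℤ)) R) Q) :=
    fun R R' h => closure_mono (conjugatesBy_mono (Icc_subset_Icc (by omega) (by omega)))
  rw [hunion, Subgroup.closure_iUnion, mem_iSup_of_directed hmono.directed_le] at hx
  obtain ⟨R₀, hR₀⟩ := hx
  exact eventually_atTop.mpr ⟨R₀, fun R hR => hmono hR hR₀⟩

theorem exists_conj_mem_closure_conjugatesBy_Icc {N : Subgroup G} [N.Normal] (hQfin : Q.Finite)
    (hQ : Q ⊆ N) (hNQ : N ≤ closure (conjugatesBy τ univ Q))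
    (hτ : ∀ g : G, τ⁻¹ * (g * τ * g⁻¹) ∈ N) (s : G) :
    ∃ R : ℕ, (∀ q ∈ Q, s * q * s⁻¹ ∈ closure (conjugatesBy τ (Icc (-(R : ℤ)) R) Q)) ∧
      (∀ q ∈ Q, s⁻¹ * q * s ∈ closure (conjugatesBy τ (Icc (-(R : ℤ)) R) Q)) ∧
      τ⁻¹ * (s * τ * s⁻¹) ∈ closure (conjugatesBy τ (Icc (-(R : ℤ)) R) Q) ∧
      τ⁻¹ * (s⁻¹ * τ * s) ∈ closure (conjugatesBy τ (Icc (-(R : ℤ)) R) Q) := by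
  have hwin {x : G} (hx : x ∈ N) := eventually_mem_closure_conjugatesBy_Icc (hNQ hx)
  have hconj (g : G) {q : G} (hq : q ∈ Q) : g * q * g⁻¹ ∈ N := ‹N.Normal›.conj_mem q (hQ hq) g
  exact (((eventually_all_finite hQfin).mpr fun q hq => hwin (hconj s hq)).and
    (((eventually_all_finite hQfin).mpr fun q hq => hwin (by simpa using hconj s⁻¹ hq)).and
      ((hwin (hτ s)).and (hwin (by simpa using hτ s⁻¹))))).exists

theorem exists_mul_zpow_of_mem_closure {S : Set G}
    (hSQ : ∀ a ∈ S, ∃ q ∈ Q, ∃ j : ℤ, a = q * τ ^ j) {x : G} (hx : x ∈ closure S) :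
    ∃ y ∈ closure (conjugatesBy τ univ Q), ∃ j : ℤ, x = y * τ ^ j := by
  have hconj {k : ℤ} {y : G} (hy : y ∈ closure (conjugatesBy τ univ Q)) :
      τ ^ k * y * τ ^ (-k) ∈ closure (conjugatesBy τ univ Q) :=
    zpow_mul_mul_zpow_neg_mem_of_mem_closure (fun _ _ => mem_univ _) hy subset_closure
  induction hx using closure_induction with
  | mem a ha =>
    obtain ⟨q, hq, j, rfl⟩ := hSQ a ha
    exact ⟨q, subset_closure ⟨0, mem_univ _, q, hq, by group⟩, j, rfl⟩
  | one => exact ⟨1, one_mem _, 0, by group⟩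
  | mul _ _ _ _ ha hb =>
    obtain ⟨y₁, hy₁, j₁, rfl⟩ := ha
    obtain ⟨y₂, hy₂, j₂, rfl⟩ := hb
    exact ⟨y₁ * (τ ^ j₁ * y₂ * τ ^ (-j₁)), mul_mem hy₁ (hconj hy₂), j₁ + j₂, by group⟩
  | inv _ _ ha =>
    obtain ⟨y, hy, j, rfl⟩ := ha
    exact ⟨τ ^ (-j) * y⁻¹ * τ ^ (-(-j)), hconj (inv_mem hy), -j, by group⟩

theorem exists_finite_inf_ker_le_closure_conjugatesBy {N : Subgroup G} (hN : N.FG)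
    {θ : G →* Multiplicative ℤ} (hτN : τ ∈ N) (hτ : θ τ ≠ 1) (hgen : N.map θ ≤ zpowers (θ τ)) :
    ∃ Q : Set G, Q.Finite ∧ Q ⊆ N ⊓ θ.ker ∧ N ⊓ θ.ker ≤ closure (conjugatesBy τ univ Q) := by
  obtain ⟨S, hSN, hS⟩ := (fg_iff N).mp hN
  have hSsub : S ⊆ N := hSN ▸ subset_closure
  choose e he using fun a (ha : a ∈ S) => mem_zpowers_iff.mp (hgen (mem_map_of_mem θ (hSsub ha)))
  set Q : Set G := range fun a : S => a * τ ^ (-e a a.2)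
  refine ⟨Q, @finite_range _ _ _ hS.to_subtype, ?_, ?_⟩
  · rintro _ ⟨⟨a, ha⟩, rfl⟩
    exact ⟨mul_mem (hSsub ha) (zpow_mem hτN _), by simp [← he a ha]⟩
  · rintro x ⟨hxN, hxθ⟩
    obtain ⟨y, hy, j, rfl⟩ := exists_mul_zpow_of_mem_closure (τ := τ) (Q := Q)
      (fun a ha => ⟨_, ⟨⟨a, ha⟩, rfl⟩, e a ha, by simp⟩) (hSN.symm ▸ hxN : x ∈ closure S)
    have hyθ : θ y = 1 := by
      refine (closure_le θ.ker).mpr ?_ hy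
      rintro _ ⟨m, -, _, ⟨⟨a, ha⟩, rfl⟩, rfl⟩
      simp [← he a ha]
    have hj : θ τ ^ j = 1 := by simpa [hyθ] using hxθ
    rwa [(IsMulTorsionFree.zpow_eq_one_iff_right hτ).mp hj, zpow_zero, mul_one]

variable {L : ℕ}

local notation "ω" => τ ^ (-(L : ℤ)) * s

theorem conj_omega_succ_mem {n : ℤ}
    (hsτ : τ⁻¹ * (s * τ * s⁻¹) ∈ closure (conjugatesBy τ (Icc (-(R : ℤ)) R) Q))
    (hH : conjugatesBy τ (Icc (n + 1 - L - R) (n + 1 - L + R)) Q ⊆ H)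
    (hn : τ ^ n * ω * τ ^ (-n) ∈ H) : τ ^ (n + 1) * ω * τ ^ (-(n + 1)) ∈ H := by
  have key : τ ^ (n + 1) * ω * τ ^ (-(n + 1)) =
      τ ^ (n + 1 - L) * (τ⁻¹ * (s * τ * s⁻¹))⁻¹ * τ ^ (-(n + 1 - L)) * (τ ^ n * ω * τ ^ (-n)) := by
    group
  rw [key]
  exact mul_mem (zpow_mul_mul_zpow_neg_mem_of_mem_closure_Icc (inv_mem hsτ) hH) hn

theorem conj_omega_pred_mem {n : ℤ}
    (hs'τ : τ⁻¹ * (s⁻¹ * τ * s) ∈ closure (conjugatesBy τ (Icc (-(R : ℤ)) R) Q))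
    (hH : conjugatesBy τ (Icc (n - R) (n + R)) Q ⊆ H)
    (hn : τ ^ n * ω * τ ^ (-n) ∈ H) : τ ^ (n - 1) * ω * τ ^ (-(n - 1)) ∈ H := by
  have key : τ ^ (n - 1) * ω * τ ^ (-(n - 1)) =
      τ ^ n * ω * τ ^ (-n) * (τ ^ n * (τ⁻¹ * (s⁻¹ * τ * s))⁻¹ * τ ^ (-n)) := by
    group
  rw [key]
  exact mul_mem hn (zpow_mul_mul_zpow_neg_mem_of_mem_closure_Icc (inv_mem hs'τ) hH)

theorem conj_mem_of_conj_omega_mem {m : ℤ} {q : G}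
    (hsq : s * q * s⁻¹ ∈ closure (conjugatesBy τ (Icc (-(R : ℤ)) R) Q))
    (hH : conjugatesBy τ (Icc (m - L - R) (m - L + R)) Q ⊆ H)
    (hm : τ ^ m * ω * τ ^ (-m) ∈ H) : τ ^ m * q * τ ^ (-m) ∈ H := by
  have key : τ ^ m * q * τ ^ (-m) =
      (τ ^ m * ω * τ ^ (-m))⁻¹ * (τ ^ (m - L) * (s * q * s⁻¹) * τ ^ (-(m - L))) *
        (τ ^ m * ω * τ ^ (-m)) := by
    group
  rw [key]
  exact mul_mem (mul_mem (inv_mem hm) (zpow_mul_mul_zpow_neg_mem_of_mem_closure_Icc hsq hH)) hm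

theorem conj_mem_of_conj_omega_mem' {m : ℤ} {q : G}
    (hs'q : s⁻¹ * q * s ∈ closure (conjugatesBy τ (Icc (-(R : ℤ)) R) Q))
    (hH : conjugatesBy τ (Icc (m + L - R) (m + L + R)) Q ⊆ H)
    (hm : τ ^ (m + L) * ω * τ ^ (-(m + L)) ∈ H) : τ ^ m * q * τ ^ (-m) ∈ H := by
  have key : τ ^ m * q * τ ^ (-m) =
      (τ ^ (m + L) * ω * τ ^ (-(m + L))) * (τ ^ (m + L) * (s⁻¹ * q * s) * τ ^ (-(m + L))) *
        (τ ^ (m + L) * ω * τ ^ (-(m + L)))⁻¹ := by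
    group
  rw [key]
  exact mul_mem (mul_mem hm (zpow_mul_mul_zpow_neg_mem_of_mem_closure_Icc hs'q hH)) (inv_mem hm)

theorem conjugatesBy_univ_subset_closure (hRL : R < L)
    (hsQ : ∀ q ∈ Q, s * q * s⁻¹ ∈ closure (conjugatesBy τ (Icc (-(R : ℤ)) R) Q))
    (hs'Q : ∀ q ∈ Q, s⁻¹ * q * s ∈ closure (conjugatesBy τ (Icc (-(R : ℤ)) R) Q))
    (hsτ : τ⁻¹ * (s * τ * s⁻¹) ∈ closure (conjugatesBy τ (Icc (-(R : ℤ)) R) Q))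
    (hs'τ : τ⁻¹ * (s⁻¹ * τ * s) ∈ closure (conjugatesBy τ (Icc (-(R : ℤ)) R) Q)) :
    conjugatesBy τ univ Q ⊆ closure (conjugatesBy τ (Icc (-(L + R : ℤ)) L) Q ∪
      conjugatesBy τ (Icc (-(L : ℤ)) L) {ω}) := by
  set B := closure (conjugatesBy τ (Icc (-(L + R : ℤ)) L) Q ∪
    conjugatesBy τ (Icc (-(L : ℤ)) L) {ω})
  have grow : ∀ j : ℕ, conjugatesBy τ (Icc (-(L + R + j : ℤ)) (L + j)) Q ⊆ B ∧
      ∀ n ∈ Icc (-(L + j : ℤ)) (L + j), τ ^ n * ω * τ ^ (-n) ∈ B := by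
    intro j
    induction j with
    | zero =>
      refine ⟨fun x hx => subset_closure (Or.inl ?_), fun n hn => subset_closure (Or.inr ?_)⟩
      · exact conjugatesBy_mono (Icc_subset_Icc (by simp) (by simp)) hx
      · exact ⟨n, by simpa using hn, _, rfl, rfl⟩
    | succ j ih =>
      obtain ⟨hQ, hω⟩ := ih
      have hwin {a b : ℤ} (ha : -(L + R + j : ℤ) ≤ a) (hb : b ≤ L + j) :
          conjugatesBy τ (Icc a b) Q ⊆ B :=
        (conjugatesBy_mono (Icc_subset_Icc ha hb)).trans hQ
      have hω' : ∀ n ∈ Icc (-(L + (j + 1 : ℕ) : ℤ)) (L + (j + 1 : ℕ)),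
          τ ^ n * ω * τ ^ (-n) ∈ B := by
        rintro n ⟨hn₁, hn₂⟩
        by_cases htop : n = L + j + 1
        · subst htop
          exact conj_omega_succ_mem hsτ (hwin (by omega) (by omega))
            (hω _ ⟨by omega, by omega⟩)
        by_cases hbot : n = -(L + j : ℤ) - 1
        · subst hbot
          exact conj_omega_pred_mem hs'τ (hwin (by omega) (by omega))
            (hω _ ⟨by omega, by omega⟩)
        exact hω n ⟨by omega, by omega⟩
      refine ⟨image2_subset_iff.mpr fun m ⟨hm₁, hm₂⟩ q hq => ?_, hω'⟩
      by_cases htop : m = L + j + 1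
      · exact conj_mem_of_conj_omega_mem (hsQ q hq) (hwin (by omega) (by omega))
          (hω' m ⟨by omega, by omega⟩)
      by_cases hbot : m = -(L + R + j : ℤ) - 1
      · exact conj_mem_of_conj_omega_mem' (hs'Q q hq) (hwin (by omega) (by omega))
          (hω' _ ⟨by omega, by omega⟩)
      exact hQ ⟨m, ⟨by omega, by omega⟩, q, hq, rfl⟩
  rintro _ ⟨m, -, q, hq, rfl⟩
  exact (grow m.natAbs).1 ⟨m, ⟨by omega, by omega⟩, q, hq, rfl⟩

end Conjugates

theorem exists_character_ne_one_fg_ker {G Γ : Type*} [Group G] [Group Γ] [Group.FG Γ] {f : G →* Γ}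
    (hf : Function.Surjective f) (hN : f.ker.FG) {ψ : G →* Multiplicative ℤ} (hψ : f.ker ≤ ψ.ker)
    {s : G} (hs : ψ s = Multiplicative.ofAdd 1) {θ : G →* Multiplicative ℤ}
    (hθ : f.ker.map θ ≠ ⊥) : ∃ χ : G →* Multiplicative ℤ, χ ≠ 1 ∧ χ.ker.FG := by
  obtain ⟨c, hc⟩ := (f.ker.map θ).isCyclic_iff_exists_zpowers_eq_top.mp inferInstance
  obtain ⟨τ, hτN, rfl⟩ : c ∈ f.ker.map θ := hc ▸ mem_zpowers c
  have hτ : θ τ ≠ 1 := fun h => hθ (by rw [← hc, h, zpowers_one_eq_bot])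
  obtain ⟨Q, hQfin, hQ, hNQ⟩ := exists_finite_inf_ker_le_closure_conjugatesBy hN hτN hτ hc.ge
  obtain ⟨R, hsQ, hs'Q, hsτ, hs'τ⟩ := exists_conj_mem_closure_conjugatesBy_Icc hQfin hQ hNQ
    (fun g => mem_inf.mpr ⟨mul_mem (inv_mem hτN) (f.normal_ker.conj_mem τ hτN g),
      by simp [mul_comm]⟩) s
  obtain ⟨χ, hχN, hχs⟩ := exists_character_eqOn_apply_eq hψ hs θ (θ τ ^ (R + 1 : ℤ))
  have hker : f.ker ⊓ χ.ker = f.ker ⊓ θ.ker := by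
    ext x
    simp only [mem_inf, MonoidHom.mem_ker]
    exact ⟨fun ⟨hx, hχx⟩ => ⟨hx, hχN x hx ▸ hχx⟩, fun ⟨hx, hθx⟩ => ⟨hx, hχN x hx ▸ hθx⟩⟩
  have hω : τ ^ (-((R + 1 : ℕ) : ℤ)) * s ∈ χ.ker := by
    rw [MonoidHom.mem_ker, map_mul, map_zpow, hχN τ hτN, hχs, ← zpow_add, Nat.cast_succ,
      neg_add_cancel, zpow_zero]
  have hχmap : f.ker.map χ ≠ ⊥ := fun h => hτ (hχN τ hτN ▸ (Subgroup.map_eq_bot_iff _).mp h hτN)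
  have hcore := conjugatesBy_univ_subset_closure (L := R + 1) R.lt_succ_self hsQ hs'Q hsτ hs'τ
  refine ⟨χ, fun h1 => hχmap (by simp [h1]),
    fg_ker_of_inf_ker_le hf hχmap ?_ ?_ (hker ▸ hNQ.trans ((closure_le _).mpr hcore))⟩
  · exact (fg_iff _).mpr ⟨_, rfl, ((conjugatesBy_finite (finite_Icc _ _) hQfin).union
      (conjugatesBy_finite (finite_Icc _ _) (finite_singleton _)))⟩
  · refine (closure_le _).mpr (union_subset ?_ ?_)
    · exact conjugatesBy_subset_of_normal fun q hq => (hker.ge (hQ hq)).2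
    · exact conjugatesBy_subset_of_normal (singleton_subset_iff.mpr hω)

theorem stmt0_general {K G Γ : Type u} [Group K] [Group G] [Group Γ]
    (hG : Group.FG G) (hK : Group.FG K)
    (i : K →* G) (f : G →* Γ)
    (hf : Function.Surjective f)
    (hex : i.range = f.ker)
    (hb1 : b1 Γ < b1 G) (hb0 : 0 < b1 Γ) :
    ∃ φ : G →* Multiplicative ℤ, Function.Surjective φ ∧ φ.ker.FG := by
  have : Group.FG Γ := Group.fg_of_surjective hf
  obtain ⟨ψ, hψ⟩ := exists_surjective_character_of_b1_pos hb0
  obtain ⟨s, hs⟩ := (hψ.comp hf) (Multiplicative.ofAdd 1)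
  obtain ⟨θ, hθ⟩ : ∃ θ : G →* Multiplicative ℤ, f.ker.map θ ≠ ⊥ := by
    by_contra! h
    exact hb1.not_ge (b1_le_of_ker_le_ker hf fun χ => (Subgroup.map_eq_bot_iff _).mp (h χ))
  have hN : f.ker.FG := hex ▸ (Group.fg_iff_subgroup_fg _).mp (Group.fg_range i)
  obtain ⟨χ, hχ, hfg⟩ := exists_character_ne_one_fg_ker (ψ := ψ.comp f) hf hN
    (fun x hx => by simp [MonoidHom.mem_ker.mp hx]) hs hθ
  obtain ⟨φ, hφ, hφχ⟩ := χ.exists_surjective_ker_eq hχ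
  exact ⟨φ, hφ, hφχ ▸ hfg⟩

/-- a finitely generated group `G` fitting in an extension
`1 → K → G → Γ → 1` with `K` finitely generated and `b₁(G) > b₁(Γ) > 0`
algebraically fibers. -/
theorem stmt0 {K G Γ : Type u} [Group K] [Group G] [Group Γ]
    (hG : Group.FG G) (hK : Group.FG K)
    (i : K →* G) (f : G →* Γ)
    (hi : Function.Injective i) (hf : Function.Surjective f)
    (hex : i.range = f.ker)
    (hb1 : b1 Γ < b1 G) (hb0 : 0 < b1 Γ) :
    ∃ φ : G →* Multiplicative ℤ, Function.Surjective φ ∧ φ.ker.FG :=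
  stmt0_general hG hK i f hf hex hb1 hb0
end

section
/- Let F₂ be a free group of rank 2 (or more generally a finitely generated free group). Every finitely generated normal subgroup of F₂ is either trivial or of finite index. -/
/-!
A finitely generated subgroup `H` of a free group is quasiconvex: writing an element of `H` as a
product of generators and tracking where cancellation stops, every prefix of its reduced word
lies within a bounded distance `L` of `H`.

Let `N` be normal and `c ≠ 1` lie in `N`, and let `g` be a shortest element of its coset `gN`.
Then the reduced word of `g c g⁻¹ ∈ N` begins with all of `g` but at most `|c|` letters:
otherwise the word of `g` ends with the part of `c` that survives in `g c`, and then either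
`g c⁻¹` is shorter than `g` or `c = 1`. By quasiconvexity `gN` contains an element of length at
most `L + |c|`, so `|g| ≤ L + |c|`. Every coset thus meets a finite ball, and `N` has finite index.
-/

namespace FreeGroup

variable {α : Type*} [DecidableEq α]

theorem IsReduced.exists_reduce_append_eq {L₁ L₂ : List (α × Bool)} (h₁ : IsReduced L₁)
    (h₂ : IsReduced L₂) :
    ∃ A B d, L₁ = A ++ d ∧ L₂ = invRev d ++ B ∧ reduce (L₁ ++ L₂) = A ++ B := by
  induction L₁ using List.reverseRecOn generalizing L₂ with
  | nil => exact ⟨[], L₂, [], rfl, rfl, h₂.reduce_eq⟩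
  | append_singleton L₁ a ih =>
    have hL₁ : IsReduced L₁ := h₁.infix (List.prefix_append _ _).isInfix
    rcases L₂ with _ | ⟨b, L₂⟩
    · exact ⟨L₁ ++ [a], [], [], by simp, rfl, by simpa using h₁.reduce_eq⟩
    by_cases hab : b = (a.1, !a.2)
    · obtain ⟨A, B, d, rfl, rfl, hred⟩ := ih hL₁ (h₂.infix (List.suffix_cons _ _).isInfix)
      refine ⟨A, B, d ++ [a], by simp, by simp [invRev, hab], ?_⟩
      rw [← hred, hab]
      exact reduce.Step.eq (by simpa using Red.Step.not (L₁ := A ++ d) (L₂ := invRev d ++ B))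
    · have hjoin : IsReduced ([a] ++ b :: L₂) := by
        refine isReduced_cons_cons.mpr ⟨fun h => ?_, h₂⟩
        by_contra h'
        exact hab (Prod.ext h.symm (Bool.eq_not_iff.mpr (Ne.symm h')))
      exact ⟨L₁ ++ [a], b :: L₂, [], by simp, by simp [invRev],
        (h₁.append_overlap hjoin (List.cons_ne_nil _ _)).reduce_eq⟩


theorem exists_toWord_mul_eq (x y : FreeGroup α) :
    ∃ A B d, x.toWord = A ++ d ∧ y.toWord = invRev d ++ B ∧ (x * y).toWord = A ++ B := by
  rw [toWord_mul]
  exact isReduced_toWord.exists_reduce_append_eq isReduced_toWord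

theorem norm_inv_mk_mul_le {x : FreeGroup α} {l t : List (α × Bool)} (h : x.toWord = l ++ t) :
    norm ((mk l)⁻¹ * x) ≤ t.length := by
  rw [← mk_toWord (x := x), h, ← mul_mk, inv_mul_cancel_left]
  exact norm_mk_le

theorem exists_prefix_norm_inv_mk_mul_prod_le {L : ℕ} (ys : List (FreeGroup α))
    (hys : ∀ y ∈ ys, norm y ≤ L) {l : List (α × Bool)} (hl : l <+: ys.prod.toWord) :
    ∃ zs, zs <+: ys ∧ norm ((mk l)⁻¹ * zs.prod) ≤ L := by
  induction ys using List.reverseRecOn generalizing l with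
  | nil =>
    obtain rfl : l = [] := by simpa using hl
    exact ⟨[], List.prefix_rfl, by simp [← one_eq_mk]⟩
  | append_singleton ys y ih =>
    obtain ⟨A, B, d, hx, hy, hxy⟩ := exists_toWord_mul_eq ys.prod y
    rw [List.prod_append, List.prod_singleton] at hl
    rcases List.prefix_or_prefix_of_prefix hl (hxy ▸ List.prefix_append A B) with hlA | ⟨b, rfl⟩
    · obtain ⟨zs, hzs, hle⟩ :=
        ih (fun z hz => hys z (by simp [hz])) (hlA.trans (hx ▸ List.prefix_append A d))
      exact ⟨zs, hzs.trans (List.prefix_append _ _), hle⟩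
    · obtain ⟨t, ht⟩ := hl
      refine ⟨ys ++ [y], List.prefix_rfl, ?_⟩
      have hlen := congrArg List.length (ht.trans hxy)
      have hy_norm : norm y = d.length + B.length := by
        simp [norm, hy, invRev_length]
      simp only [List.length_append] at hlen
      calc norm ((mk (A ++ b))⁻¹ * (ys ++ [y]).prod) ≤ t.length := by
            rw [List.prod_append, List.prod_singleton]; exact norm_inv_mk_mul_le ht.symm
        _ ≤ norm y := by omega
        _ ≤ L := hys y (by simp)

/-- Prefixes of reduced words are the vertices of geodesics from `1` in the Cayley tree, so this is
`L`-quasiconvexity of `H`. -/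
def IsQuasiconvex (H : Subgroup (FreeGroup α)) (L : ℕ) : Prop :=
  ∀ x ∈ H, ∀ l, l <+: x.toWord → ∃ q ∈ H, norm ((mk l)⁻¹ * q) ≤ L

theorem exists_isQuasiconvex_of_fg {H : Subgroup (FreeGroup α)} (hH : H.FG) :
    ∃ L, IsQuasiconvex H L := by
  obtain ⟨S, rfl⟩ := hH
  refine ⟨S.sup norm, fun x hx l hl => ?_⟩
  rw [← Subgroup.mem_toSubmonoid, Subgroup.closure_toSubmonoid] at hx
  obtain ⟨ys, hys, rfl⟩ := Submonoid.exists_list_of_mem_closure hx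
  have hnorm : ∀ y ∈ ys, norm y ≤ S.sup norm := fun y hy => by
    rcases hys y hy with h | h
    · exact Finset.le_sup h
    · rw [← norm_inv_eq]
      exact Finset.le_sup h
  obtain ⟨zs, hzs, hle⟩ := exists_prefix_norm_inv_mk_mul_prod_le ys hnorm hl
  refine ⟨zs.prod, Subgroup.list_prod_mem _ fun z hz => ?_, hle⟩
  rw [← Subgroup.mem_toSubmonoid, Subgroup.closure_toSubmonoid]
  exact Submonoid.subset_closure (hys z (hzs.subset hz))


theorem prefix_toWord_mul_inv_or_suffix {x y : FreeGroup α} {P W : List (α × Bool)}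
    (hx : x.toWord = P ++ W) : P <+: (x * y⁻¹).toWord ∨ W <:+ y.toWord := by
  obtain ⟨U, V, e, hxU, hy, hxy⟩ := exists_toWord_mul_eq x y⁻¹
  rcases List.prefix_or_prefix_of_prefix (hx ▸ List.prefix_append P W)
      (hxU ▸ List.prefix_append U e) with hPU | hUP
  · exact .inl (hxy ▸ hPU.trans (List.prefix_append U V))
  · have hlen := congrArg List.length (hx.symm.trans hxU)
    simp only [List.length_append] at hlen
    have hWe : W <:+ e := List.suffix_of_suffix_length_le (hx ▸ List.suffix_append P W)
      (hxU ▸ List.suffix_append U e) (by have := hUP.length_le; omega)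
    have hye : y.toWord = invRev V ++ e := by
      rw [← inv_inv y, toWord_inv, hy, invRev_append, invRev_invRev]
    exact .inr (hWe.trans (hye ▸ List.suffix_append _ _))

theorem norm_le_of_isQuasiconvex {N : Subgroup (FreeGroup α)} [N.Normal] {L : ℕ}
    (hN : IsQuasiconvex N L) {c : FreeGroup α} (hcN : c ∈ N) (hc : c ≠ 1) {g : FreeGroup α}
    (hg : ∀ n ∈ N, norm g ≤ norm (g * n)) : norm g ≤ L + norm c := by
  obtain ⟨P, W, d, hgP, hcW, hgcP⟩ := exists_toWord_mul_eq g c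
  have hc_norm : norm c = d.length + W.length := by simp [norm, hcW, invRev_length]
  have hg_norm : norm g = P.length + d.length := by simp [norm, hgP]
  have hdW : d.length ≤ W.length := by
    have := hg c hcN
    simp only [norm, hgP, hgcP, List.length_append] at this
    omega
  rcases prefix_toWord_mul_inv_or_suffix (y := g) hgcP with hP | ⟨X, hX⟩
  · obtain ⟨q, hqN, hq⟩ := hN _ (Subgroup.Normal.conj_mem ‹_› c hcN g) P hP
    calc norm g ≤ norm (g * (g⁻¹ * q⁻¹ * g)) :=
          hg _ (by simpa using Subgroup.Normal.conj_mem ‹_› _ (N.inv_mem hqN) g⁻¹)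
      _ = norm (((mk P)⁻¹ * q)⁻¹ * ((mk P)⁻¹ * g)) := by group
      _ ≤ norm ((mk P)⁻¹ * q)⁻¹ + norm ((mk P)⁻¹ * g) := norm_mul_le _ _
      _ ≤ L + d.length := add_le_add (by rwa [norm_inv_eq]) (norm_inv_mk_mul_le hgP)
      _ ≤ L + norm c := by omega
  · exfalso
    have hgc_inv : g * c⁻¹ = mk (X ++ d) := by
      rw [← mk_toWord (x := g), ← mk_toWord (x := c), ← hX, hcW, ← mul_mk, ← mul_mk, ← mul_mk,
        ← inv_mk]
      group
    have hle := (hg _ (N.inv_mem hcN)).trans (hgc_inv ▸ norm_mk_le)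
    have hX_norm : norm g = X.length + W.length := by simp [norm, ← hX]
    simp only [List.length_append] at hle
    have hdW' : d = W := (List.append_inj' (hgP.symm.trans hX.symm) (by omega)).2
    apply hc
    rw [← mk_toWord (x := c), hcW, hdW', ← mul_mk, ← inv_mk, inv_mul_cancel]


theorem exists_mul_mem_forall_norm_le (N : Subgroup (FreeGroup α)) (g : FreeGroup α) :
    ∃ n ∈ N, ∀ m ∈ N, norm (g * n) ≤ norm (g * n * m) := by
  classical
  have h : ∃ k, ∃ n ∈ N, norm (g * n) = k := ⟨_, 1, N.one_mem, rfl⟩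
  obtain ⟨n, hn, hk⟩ := Nat.find_spec h
  refine ⟨n, hn, fun m hm => ?_⟩
  rw [hk, mul_assoc]
  exact Nat.find_min' h ⟨n * m, N.mul_mem hn hm, rfl⟩

theorem finiteIndex_of_forall_exists_norm_mul_le [Finite α] {N : Subgroup (FreeGroup α)} {R : ℕ}
    (h : ∀ g, ∃ n ∈ N, norm (g * n) ≤ R) : N.FiniteIndex := by
  have hball : {x : FreeGroup α | norm x ≤ R}.Finite :=
    (List.finite_length_le _ R).preimage toWord_injective.injOn
  have : Finite (FreeGroup α ⧸ N) := by
    refine Set.finite_univ_iff.mp ((hball.image QuotientGroup.mk).subset fun q _ => ?_)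
    obtain ⟨g, rfl⟩ := QuotientGroup.mk_surjective q
    obtain ⟨n, hn, hle⟩ := h g
    exact ⟨g * n, hle, QuotientGroup.mk_mul_of_mem g hn⟩
  exact Subgroup.finiteIndex_of_finite_quotient

end FreeGroup

/-- every finitely generated normal subgroup of a finitely generated
free group (in particular of `F₂ = FreeGroup (Fin 2)`) is trivial or of finite index. -/
theorem stmt7 {ι : Type*} [Finite ι]
    (N : Subgroup (FreeGroup ι)) [N.Normal] (hN : N.FG) :
    N = ⊥ ∨ N.FiniteIndex := by
  classical
  rcases N.bot_or_exists_ne_one with hbot | ⟨c, hcN, hc⟩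
  · exact .inl hbot
  obtain ⟨L, hL⟩ := FreeGroup.exists_isQuasiconvex_of_fg hN
  refine .inr (FreeGroup.finiteIndex_of_forall_exists_norm_mul_le (R := L + c.norm) fun g => ?_)
  obtain ⟨n, hn, hmin⟩ := FreeGroup.exists_mul_mem_forall_norm_le N g
  exact ⟨n, hn, FreeGroup.norm_le_of_isQuasiconvex hL hcN hc hmin⟩
end

section
/- Let Π = Π₁ *_K Π₂ be an amalgamated free product of finitely generated groups over a finitely generated subgroup K, where Π₂ = ⟨K, s | sks⁻¹ = f(k)⟩ is an HNN extension of K by an automorphism f. Let χ: Π → ℝ be a nonzero character with χ|_{Π₁} representing a point of the BNS invariant Σ¹(Π₁), χ|_K ≠ 0, and χ(s) = 0. Then [χ] ∈ Σ¹(Π). -/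
/-- `χ : G → ℝ` is an (additive) character. -/
def IsChar {G : Type*} [Group G] (χ : G → ℝ) : Prop :=
  ∀ a b : G, χ (a * b) = χ a + χ b

/-- `[χ]` lies in the Bieri–Neumann–Strebel invariant `Σ¹(G)`: `χ` is a nonzero
character and, for every finite generating set `S` of `G`, the full subgraph of the
Cayley graph `Γ(G,S)` on the vertices `{g : 0 ≤ χ g}` is connected. -/
def InSigma1 {G : Type*} [Group G] (χ : G → ℝ) : Prop :=
  IsChar χ ∧ χ ≠ (fun _ => 0) ∧
    ∀ S : Finset G, Subgroup.closure (S : Set G) = ⊤ →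
      ∀ x y : G, 0 ≤ χ x → 0 ≤ χ y →
        Relation.ReflTransGen
          (fun a b => 0 ≤ χ a ∧ 0 ≤ χ b ∧ ∃ s ∈ S, b = a * s ∨ a = b * s) x y
/-- The amalgamated free product `Π₁ *_K Π₂` along `j₁ : K → Π₁`, `j₂ : K → Π₂`:
the quotient of the free product `Π₁ ∗ Π₂` by the normal closure of the elements
`j₁(k) j₂(k)⁻¹`. -/
def Amal {K P₁ P₂ : Type*} [Group K] [Group P₁] [Group P₂]
    (j₁ : K →* P₁) (j₂ : K →* P₂) : Type _ :=
  (Monoid.Coprod P₁ P₂) ⧸ Subgroup.normalClosure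
    {x | ∃ k : K, x = Monoid.Coprod.inl (j₁ k) * (Monoid.Coprod.inr (j₂ k))⁻¹}

instance {K P₁ P₂ : Type*} [Group K] [Group P₁] [Group P₂]
    (j₁ : K →* P₁) (j₂ : K →* P₂) : Group (Amal j₁ j₂) :=
  QuotientGroup.Quotient.group _

/-- The canonical map `Π₁ → Π₁ *_K Π₂`. -/
def amalInl {K P₁ P₂ : Type*} [Group K] [Group P₁] [Group P₂]
    (j₁ : K →* P₁) (j₂ : K →* P₂) : P₁ →* Amal j₁ j₂ :=
  (QuotientGroup.mk' _).comp Monoid.Coprod.inl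

/-- The canonical map `Π₂ → Π₁ *_K Π₂`. -/
def amalInr {K P₁ P₂ : Type*} [Group K] [Group P₁] [Group P₂]
    (j₁ : K →* P₁) (j₂ : K →* P₂) : P₂ →* Amal j₁ j₂ :=
  (QuotientGroup.mk' _).comp Monoid.Coprod.inr

/-!
Fix `k ∈ K` with `χ(k) > 0` and write `v = χ(k)`. Since `χ|_{Π₁} ∈ Σ¹(Π₁)`, translating a
`Π₁`-path by a suitable power of `k` joins, above level `0`, any two points of level `≥ v`
that differ by an element of `Π₁`. To cross a stable letter `s^{±1}` after a `Π₁`-syllable `p`,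
first append a large power of `f^{±1}(k) ∈ K ⊆ Π₁`, so that the level stays `≥ v` while
stepping across `s^{±1}` (recall `χ(s) = 0`); on the other side this power becomes a power of
`k`, which is absorbed into the next `Π₁`-syllable. By induction on the number of stable
letters, any two points of level `≥ v` are joined above `0` in the Cayley graph for the
generators of `Π₁` together with `s`. Changing to another finite generating set costs only a
bounded drop in level, which is compensated by translating with a positive element.
-/

open Relation Subgroup

namespace IsChar

variable {G : Type*} [Group G] {χ : G → ℝ}

theorem map_one (hχ : IsChar χ) : χ 1 = 0 := by
  have := hχ 1 1
  rw [mul_one] at this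
  linarith

theorem map_inv (hχ : IsChar χ) (a : G) : χ a⁻¹ = -χ a := by
  have := hχ a a⁻¹
  rw [mul_inv_cancel, hχ.map_one] at this
  linarith

theorem map_pow (hχ : IsChar χ) (a : G) (n : ℕ) : χ (a ^ n) = n * χ a := by
  induction n with
  | zero => simp [hχ.map_one]
  | succ n ih => rw [pow_succ, hχ, ih]; push_cast; ring

theorem pos_or_pos_inv (hχ : IsChar χ) {a : G} (ha : χ a ≠ 0) : 0 < χ a ∨ 0 < χ a⁻¹ := by
  rw [hχ.map_inv]
  rcases ha.lt_or_gt with h | h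
  · exact .inr (by linarith)
  · exact .inl h

theorem eq_of_semiconjBy (hχ : IsChar χ) {t x y : G} (h : SemiconjBy t x y) : χ x = χ y := by
  have := congrArg χ h.eq
  rw [hχ, hχ] at this
  linarith

end IsChar

section LevelJoined

variable {G : Type*} [Group G] (χ : G → ℝ)

def LevelStep (S : Set G) (c : ℝ) (a b : G) : Prop :=
  c ≤ χ a ∧ c ≤ χ b ∧ ∃ s ∈ S, b = a * s ∨ a = b * s

def LevelJoined (S : Set G) (c : ℝ) : G → G → Prop :=
  ReflTransGen (LevelStep χ S c)

variable {χ} {S : Set G} {c : ℝ} {a b : G}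

instance (S : Set G) (c : ℝ) : Std.Symm (LevelStep χ S c) :=
  ⟨fun _ _ ⟨ha, hb, s, hs, e⟩ => ⟨hb, ha, s, hs, e.symm⟩⟩

theorem LevelJoined.symm (h : LevelJoined χ S c a b) : LevelJoined χ S c b a :=
  ReflTransGen.stdSymm.symm _ _ h

theorem LevelJoined.mono_level {c' : ℝ} (hc : c' ≤ c) (h : LevelJoined χ S c a b) :
    LevelJoined χ S c' a b :=
  ReflTransGen.mono (fun _ _ ⟨ha, hb, e⟩ => ⟨hc.trans ha, hc.trans hb, e⟩) _ _ h

theorem LevelJoined.mul_left (hχ : IsChar χ) (w : G) (h : LevelJoined χ S c a b) :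
    LevelJoined χ S (c + χ w) (w * a) (w * b) := by
  refine ReflTransGen.lift (w * ·) (fun x y ⟨hx, hy, s, hs, e⟩ => ⟨?_, ?_, s, hs, ?_⟩) _ _ h
  · rw [hχ]; linarith
  · rw [hχ]; linarith
  · rcases e with rfl | rfl <;> simp [mul_assoc]

theorem LevelJoined.map {P : Type*} [Group P] (ι : P →* G) {A : Set P} (hA : ι '' A ⊆ S)
    {x y : P} (h : LevelJoined (χ ∘ ι) A c x y) : LevelJoined χ S c (ι x) (ι y) := by
  refine ReflTransGen.lift ι
    (fun _ _ ⟨hx, hy, s, hs, e⟩ => ⟨hx, hy, ι s, hA ⟨s, hs, rfl⟩, ?_⟩) _ _ h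
  rcases e with rfl | rfl <;> simp

theorem levelJoined_mul_of_mem {u : G} (hu : u ∈ S ∨ u⁻¹ ∈ S) (ha : c ≤ χ a)
    (hau : c ≤ χ (a * u)) : LevelJoined χ S c a (a * u) :=
  ReflTransGen.single
    ⟨ha, hau, hu.elim (fun h => ⟨u, h, .inl rfl⟩) (fun h => ⟨u⁻¹, h, .inr (by simp)⟩)⟩

theorem levelJoined_mul_pow (hχ : IsChar χ) {u : G} (hu : u ∈ S ∨ u⁻¹ ∈ S) (hu0 : 0 ≤ χ u)
    (ha : c ≤ χ a) (n : ℕ) : LevelJoined χ S c a (a * u ^ n) := by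
  induction n with
  | zero => rw [pow_zero, mul_one]; exact .refl
  | succ n ih =>
    have hn : c ≤ χ (a * u ^ n) := by
      rw [hχ, hχ.map_pow]
      nlinarith [n.cast_nonneg (α := ℝ)]
    refine ih.trans ?_
    rw [pow_succ, ← mul_assoc]
    exact levelJoined_mul_of_mem hu hn (by rw [hχ]; linarith)

theorem exists_levelJoined_mul (hχ : IsChar χ) (hS : closure S = ⊤) (g : G) :
    ∃ C, 0 ≤ C ∧ ∀ w c, c + C ≤ χ w → LevelJoined χ S c w (w * g) := by
  have step : ∀ u y, (u ∈ S ∨ u⁻¹ ∈ S) →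
      (∃ C, 0 ≤ C ∧ ∀ w c, c + C ≤ χ w → LevelJoined χ S c w (w * y)) →
      ∃ C, 0 ≤ C ∧ ∀ w c, c + C ≤ χ w → LevelJoined χ S c w (w * (u * y)) := by
    rintro u y hu ⟨C, hC0, hC⟩
    refine ⟨C + |χ u|, by positivity, fun w c hw => ?_⟩
    have hwu : c + C ≤ χ (w * u) := by rw [hχ]; linarith [neg_abs_le (χ u)]
    rw [← mul_assoc]
    exact (levelJoined_mul_of_mem hu (by linarith [abs_nonneg (χ u)]) (by linarith)).trans
      (hC _ _ hwu)
  have hg : g ∈ closure S := hS ▸ mem_top g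
  induction hg using closure_induction_left with
  | one => exact ⟨0, le_rfl, fun w c _ => by rw [mul_one]; exact .refl⟩
  | mul_left u hu y _ ih => exact step u y (.inl hu) ih
  | inv_mul_cancel u hu y _ ih => exact step u⁻¹ y (.inr (by rwa [inv_inv])) ih

theorem exists_levelJoined_of_finite (hχ : IsChar χ) (hS : closure S = ⊤) {X : Set G}
    (hX : X.Finite) :
    ∃ C, 0 ≤ C ∧ ∀ {c a b}, LevelJoined χ X c a b → LevelJoined χ S (c - C) a b := by
  choose C hC0 hC using exists_levelJoined_mul hχ hS
  refine ⟨∑ x ∈ hX.toFinset, C x, Finset.sum_nonneg fun x _ => hC0 x, fun h => ?_⟩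
  have hle : ∀ x ∈ X, C x ≤ ∑ y ∈ hX.toFinset, C y := fun x hx =>
    Finset.single_le_sum (fun y _ => hC0 y) (hX.mem_toFinset.2 hx)
  induction h with
  | refl => exact .refl
  | tail _ hst ih =>
    obtain ⟨hp, hq, x, hx, e⟩ := hst
    refine ih.trans ?_
    rcases e with rfl | rfl
    · exact hC x _ _ (by linarith [hle x hx])
    · exact (hC x _ _ (by linarith [hle x hx])).symm

theorem exists_pos_of_closure_eq_top (hχ : IsChar χ) (hχ0 : χ ≠ fun _ => 0)
    (hS : closure S = ⊤) : ∃ u, (u ∈ S ∨ u⁻¹ ∈ S) ∧ 0 < χ u := by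
  obtain ⟨s, hs, hs0⟩ : ∃ s ∈ S, χ s ≠ 0 := by
    by_contra! h
    refine hχ0 (funext fun g => ?_)
    have hg : g ∈ closure S := hS ▸ mem_top g
    induction hg using closure_induction with
    | mem x hx => exact h x hx
    | one => exact hχ.map_one
    | mul x y _ _ hx hy => rw [hχ, hx, hy, add_zero]
    | inv x _ hx => rw [hχ.map_inv, hx, neg_zero]
  rcases hχ.pos_or_pos_inv hs0 with h | h
  · exact ⟨s, .inl hs, h⟩
  · exact ⟨s⁻¹, .inr (by rwa [inv_inv]), h⟩

theorem inSigma1_of_levelJoined (hχ : IsChar χ) (hχ0 : χ ≠ fun _ => 0) {X : Set G}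
    (hX : X.Finite) {v : ℝ} (hjoin : ∀ a b, v ≤ χ a → v ≤ χ b → LevelJoined χ X 0 a b) :
    InSigma1 χ := by
  refine ⟨hχ, hχ0, fun S hS x y hx hy => ?_⟩
  obtain ⟨u, hu, hu0⟩ := exists_pos_of_closure_eq_top hχ hχ0 hS
  obtain ⟨C, -, hC⟩ := exists_levelJoined_of_finite hχ hS hX
  obtain ⟨n₀, hn₀⟩ := Archimedean.arch C hu0
  set z := u ^ n₀
  have hz : C ≤ χ z := by rwa [hχ.map_pow, ← nsmul_eq_mul]
  have high : ∀ a b, χ z + v ≤ χ a → χ z + v ≤ χ b → LevelJoined χ S 0 a b := by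
    intro a b ha hb
    have h := (hC (hjoin (z⁻¹ * a) (z⁻¹ * b) (by rw [hχ, hχ.map_inv]; linarith)
      (by rw [hχ, hχ.map_inv]; linarith))).mul_left hχ z
    rw [mul_inv_cancel_left, mul_inv_cancel_left] at h
    exact h.mono_level (by linarith)
  obtain ⟨n, hn⟩ := Archimedean.arch (χ z + v) hu0
  rw [nsmul_eq_mul] at hn
  refine ((levelJoined_mul_pow hχ hu hu0.le hx n).trans (high _ _ ?_ ?_)).trans
    (levelJoined_mul_pow hχ hu hu0.le hy n).symm
  · rw [hχ x, hχ.map_pow u n]; linarith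
  · rw [hχ y, hχ.map_pow u n]; linarith

end LevelJoined

section StableLetter

variable {G P : Type*} [Group G] [Group P] {χ : G → ℝ}

def JoinsHighCoset (χ : G → ℝ) (X : Set G) (ι : P →* G) (v : ℝ) (h : G) : Prop :=
  ∀ p w, v ≤ χ w → v ≤ χ (w * (ι p * h)) → LevelJoined χ X 0 w (w * (ι p * h))

variable {X : Set G} {ι : P →* G} {v : ℝ} {h : G}

theorem JoinsHighCoset.mul_left_range (hh : JoinsHighCoset χ X ι v h) (p : P) :
    JoinsHighCoset χ X ι v (ι p * h) := by
  intro q w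
  simpa only [map_mul, mul_assoc] using hh (q * p) w

theorem joinsHighCoset_one_of_inSigma1 (hχ : IsChar χ) {A : Finset P}
    (hA : closure (A : Set P) = ⊤) (hP : InSigma1 (χ ∘ ι)) (hAX : ι '' A ⊆ X) {k : P}
    (hk : 0 < χ (ι k)) : JoinsHighCoset χ X ι (χ (ι k)) 1 := by
  intro p w hw hwp
  rw [mul_one] at hwp ⊢
  rw [hχ] at hwp
  set m := ⌊χ w / χ (ι k)⌋₊
  have hm : m * χ (ι k) ≤ χ w :=
    (le_div_iff₀ hk).1 (Nat.floor_le (div_nonneg (by linarith) hk.le))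
  have hm' : χ w < (m + 1) * χ (ι k) := (div_lt_iff₀ hk).1 (Nat.lt_floor_add_one _)
  have hpath := (LevelJoined.map ι hAX (hP.2.2 A hA (k ^ m) (k ^ m * p) ?_ ?_)).mul_left hχ
    (w * (ι k ^ m)⁻¹)
  · simp only [map_mul, map_pow, mul_assoc, inv_mul_cancel, mul_one, inv_mul_cancel_left]
      at hpath
    refine hpath.mono_level ?_
    rw [hχ, hχ.map_inv, hχ.map_pow]
    linarith
  · change 0 ≤ χ (ι (k ^ m))
    rw [map_pow, hχ.map_pow]
    positivity
  · change 0 ≤ χ (ι (k ^ m * p))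
    rw [map_mul, map_pow, hχ, hχ.map_pow]
    linarith

/-- Crossing a stable letter `t`: a large power of `ι q'` before `t` keeps the level up and
turns into the power of `ι q` that the next syllable absorbs. -/
theorem JoinsHighCoset.mul_left_of_semiconjBy (hh : JoinsHighCoset χ X ι v h)
    (hone : JoinsHighCoset χ X ι v 1) (hχ : IsChar χ) (hv : 0 ≤ v) {t : G}
    (htX : t ∈ X ∨ t⁻¹ ∈ X) (ht : χ t = 0) {q q' : P} (hq : 0 < χ (ι q))
    (hconj : SemiconjBy t (ι q) (ι q')) : JoinsHighCoset χ X ι v (t * h) := by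
  intro p w hw hwh
  have hq' : χ (ι q') = χ (ι q) := (hχ.eq_of_semiconjBy hconj).symm
  obtain ⟨N, hN⟩ := Archimedean.arch (-χ (ι p)) hq
  rw [nsmul_eq_mul] at hN
  set w' := w * ι (p * q' ^ N)
  have hw' : χ w' = χ w + χ (ι p) + N * χ (ι q) := by
    rw [hχ, map_mul, hχ, map_pow, hχ.map_pow, hq', add_assoc]
  have hcross : w' * t * (ι (q ^ N)⁻¹ * h) = w * (ι p * (t * h)) :=
    calc w' * t * (ι (q ^ N)⁻¹ * h)
        = w * ι p * (ι q' ^ N * t) * (ι q ^ N)⁻¹ * h := by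
          simp only [w', map_mul, map_pow, map_inv, mul_assoc]
      _ = w * ι p * (t * ι q ^ N) * (ι q ^ N)⁻¹ * h := by rw [(hconj.pow_right N).eq]
      _ = w * (ι p * (t * h)) := by group
  have h₁ : LevelJoined χ X 0 w w' := by
    have hvw' : v ≤ χ w' := by linarith
    simpa only [mul_one] using hone (p * q' ^ N) w hw (by rwa [mul_one])
  have h₂ : LevelJoined χ X 0 w' (w' * t) :=
    levelJoined_mul_of_mem htX (by linarith) (by rw [hχ, ht]; linarith)
  have h₃ := hh (q ^ N)⁻¹ (w' * t) (by rw [hχ, ht]; linarith) (by rwa [hcross])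
  rw [hcross] at h₃
  exact h₁.trans (h₂.trans h₃)

theorem levelJoined_of_joinsHighCoset_one (hχ : IsChar χ) (hv : 0 ≤ v) {t : G}
    (hgen : closure (insert t (Set.range ι)) = ⊤) (htX : t ∈ X) (ht : χ t = 0) {q q' : P}
    (hq : 0 < χ (ι q)) (hconj : SemiconjBy t (ι q) (ι q')) (hone : JoinsHighCoset χ X ι v 1)
    {a b : G} (ha : v ≤ χ a) (hb : v ≤ χ b) : LevelJoined χ X 0 a b := by
  have hq' : 0 < χ (ι q') := hχ.eq_of_semiconjBy hconj ▸ hq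
  have hall (g : G) : JoinsHighCoset χ X ι v g := by
    have hg : g ∈ closure (insert t (Set.range ι)) := hgen ▸ mem_top g
    induction hg using closure_induction_left with
    | one => exact hone
    | mul_left x hx y _ ih =>
      rcases hx with rfl | ⟨p, rfl⟩
      · exact ih.mul_left_of_semiconjBy hone hχ hv (.inl htX) ht hq hconj
      · exact ih.mul_left_range p
    | inv_mul_cancel x hx y _ ih =>
      rcases hx with rfl | ⟨p, rfl⟩
      · exact ih.mul_left_of_semiconjBy hone hχ hv (.inr (by rwa [inv_inv]))
          (by rw [hχ.map_inv, ht, neg_zero]) hq' hconj.inv_symm_left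
      · rw [← map_inv]
        exact ih.mul_left_range p⁻¹
  simpa using hall (a⁻¹ * b) 1 a ha (by simpa using hb)

end StableLetter

section Amalgam

variable {K P₁ P₂ : Type*} [Group K] [Group P₁] [Group P₂]

theorem amalInl_apply_eq_amalInr_apply (j₁ : K →* P₁) (j₂ : K →* P₂) (c : K) :
    amalInl j₁ j₂ (j₁ c) = amalInr j₁ j₂ (j₂ c) :=
  QuotientGroup.eq_iff_div_mem.2 (subset_normalClosure ⟨c, div_eq_mul_inv _ _⟩)

theorem range_amalInl_sup_range_amalInr (j₁ : K →* P₁) (j₂ : K →* P₂) :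
    (amalInl j₁ j₂).range ⊔ (amalInr j₁ j₂).range = ⊤ :=
  (Monoid.Coprod.range_eq _).symm.trans
    (MonoidHom.range_eq_top.2 (QuotientGroup.mk'_surjective _))

abbrev stableLetter (f : MulAut K) (j₁ : K →* P₁) :
    Amal j₁ (SemidirectProduct.inl : K →* K ⋊[zpowersHom (MulAut K) f] Multiplicative ℤ) :=
  amalInr j₁ SemidirectProduct.inl (SemidirectProduct.inr (Multiplicative.ofAdd 1))

theorem closure_insert_stableLetter (f : MulAut K) (j₁ : K →* P₁) :
    closure (insert (stableLetter f j₁) (Set.range (amalInl j₁ SemidirectProduct.inl))) = ⊤ := by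
  rw [eq_top_iff, ← range_amalInl_sup_range_amalInr, sup_le_iff]
  refine ⟨fun x hx => subset_closure (.inr hx), ?_⟩
  rintro _ ⟨q, rfl⟩
  rw [← SemidirectProduct.inl_left_mul_inr_right q, map_mul]
  refine mul_mem (subset_closure (.inr ⟨j₁ q.left, amalInl_apply_eq_amalInr_apply _ _ _⟩)) ?_
  have : SemidirectProduct.inr q.right =
      (SemidirectProduct.inr (Multiplicative.ofAdd 1) : K ⋊[zpowersHom (MulAut K) f] _) ^
        q.right.toAdd := by
    rw [← map_zpow, ← ofAdd_zsmul, smul_eq_mul, mul_one, ofAdd_toAdd]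
  rw [this, map_zpow]
  exact zpow_mem (subset_closure (.inl rfl)) _

theorem semiconjBy_stableLetter (f : MulAut K) (j₁ : K →* P₁) (c : K) :
    SemiconjBy (stableLetter f j₁) (amalInl j₁ SemidirectProduct.inl (j₁ c))
      (amalInl j₁ SemidirectProduct.inl (j₁ (f c))) := by
  simp only [SemiconjBy, stableLetter, amalInl_apply_eq_amalInr_apply, ← map_mul]
  have hf : f c = zpowersHom (MulAut K) f (Multiplicative.ofAdd 1) c := by simp
  rw [hf, SemidirectProduct.inl_aut, map_inv, inv_mul_cancel_right]

end Amalgam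

theorem stmt14_general {K P₁ : Type*} [Group K] [Group P₁]
    (h1 : Group.FG P₁)
    (f : MulAut K) (j₁ : K →* P₁)
    (χ : Amal j₁ (SemidirectProduct.inl :
        K →* K ⋊[zpowersHom (MulAut K) f] Multiplicative ℤ) → ℝ)
    (hχ : IsChar χ) (hχ0 : χ ≠ (fun _ => 0))
    (hχ1 : InSigma1 (χ ∘ amalInl j₁ SemidirectProduct.inl))
    (hχK : ∃ k : K, χ (amalInl j₁ SemidirectProduct.inl (j₁ k)) ≠ 0)
    (hs : χ (amalInr j₁ SemidirectProduct.inl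
        (SemidirectProduct.inr (Multiplicative.ofAdd (1 : ℤ)))) = 0) :
    InSigma1 χ := by
  obtain ⟨k, hk⟩ : ∃ k : K, 0 < χ (amalInl j₁ SemidirectProduct.inl (j₁ k)) := by
    obtain ⟨k, hk⟩ := hχK
    rcases hχ.pos_or_pos_inv hk with h | h
    · exact ⟨k, h⟩
    · exact ⟨k⁻¹, by simpa using h⟩
  obtain ⟨A, hA⟩ := h1.out
  refine inSigma1_of_levelJoined (v := χ (amalInl j₁ SemidirectProduct.inl (j₁ k))) hχ hχ0
    ((A.finite_toSet.image (amalInl j₁ SemidirectProduct.inl)).insert (stableLetter f j₁))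
    fun a b ha hb => ?_
  exact levelJoined_of_joinsHighCoset_one hχ hk.le (closure_insert_stableLetter f j₁)
    (Set.mem_insert _ _) hs hk (semiconjBy_stableLetter f j₁ k)
    (joinsHighCoset_one_of_inSigma1 hχ hA hχ1 (Set.subset_insert _ _) hk) ha hb

/-- let `Π = Π₁ *_K Π₂` with `Π₂ = K ⋊_f ℤ` the HNN extension of `K`
by an automorphism `f` (with stable letter `s`). If `χ : Π → ℝ` is a nonzero
character with `[χ|_{Π₁}] ∈ Σ¹(Π₁)`, `χ|_K ≠ 0` and `χ(s) = 0`, then `[χ] ∈ Σ¹(Π)`. -/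
theorem stmt14 {K P₁ : Type*} [Group K] [Group P₁]
    (hK : Group.FG K) (h1 : Group.FG P₁)
    (f : MulAut K) (j₁ : K →* P₁) (hj₁ : Function.Injective j₁)
    (χ : Amal j₁ (SemidirectProduct.inl :
        K →* K ⋊[zpowersHom (MulAut K) f] Multiplicative ℤ) → ℝ)
    (hχ : IsChar χ) (hχ0 : χ ≠ (fun _ => 0))
    (hχ1 : InSigma1 (χ ∘ amalInl j₁ SemidirectProduct.inl))
    (hχK : ∃ k : K, χ (amalInl j₁ SemidirectProduct.inl (j₁ k)) ≠ 0)
    (hs : χ (amalInr j₁ SemidirectProduct.inl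
        (SemidirectProduct.inr (Multiplicative.ofAdd (1 : ℤ)))) = 0) :
    InSigma1 χ :=
  stmt14_general h1 f j₁ χ hχ hχ0 hχ1 hχK hs
end

section
/- Let G be a finitely generated group and χ: G → ℤ an epimorphism. Then ker χ is finitely generated if and only if both [χ] and [−χ] lie in the BNS invariant Σ¹(G). -/
open Subgroup Relation Set Filter

namespace BNS

variable {G : Type*} [Group G]

def height (χ : G →* Multiplicative ℤ) (g : G) : ℤ := Multiplicative.toAdd (χ g)

section height

variable (χ : G →* Multiplicative ℤ)

@[simp] lemma height_mul (a b : G) : height χ (a * b) = height χ a + height χ b := by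
  simp [height]

@[simp] lemma height_one : height χ 1 = 0 := by simp [height]

@[simp] lemma height_inv (a : G) : height χ a⁻¹ = -height χ a := by simp [height]

@[simp] lemma height_pow (a : G) (n : ℕ) : height χ (a ^ n) = n * height χ a := by
  simp [height]

@[simp] lemma height_zpow (a : G) (n : ℤ) : height χ (a ^ n) = n * height χ a := by
  simp [height]

@[simp] lemma height_hom_inv (a : G) : height χ⁻¹ a = -height χ a := by simp [height]

variable {χ}

lemma height_eq_zero_iff {a : G} : height χ a = 0 ↔ a ∈ χ.ker := by simp [height]

lemma exists_height_eq_one (hχ : Function.Surjective χ) : ∃ t, height χ t = 1 :=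
  (hχ (Multiplicative.ofAdd 1)).imp fun _ ht => by simp [height, ht]

lemma ne_one_of_surjective (hχ : Function.Surjective χ) : χ ≠ 1 := by
  obtain ⟨t, ht⟩ := exists_height_eq_one hχ
  rintro rfl
  simp [height] at ht

end height

def LevelAdj (χ : G →* Multiplicative ℤ) (S : Set G) (c : ℤ) (a b : G) : Prop :=
  c ≤ height χ a ∧ c ≤ height χ b ∧ ∃ s ∈ S, b = a * s ∨ a = b * s

section LevelAdj

variable {χ : G →* Multiplicative ℤ} {S : Set G} {c d : ℤ} {a b s : G}

instance : Std.Symm (LevelAdj χ S c) :=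
  ⟨fun _ _ ⟨ha, hb, s, hs, h⟩ => ⟨hb, ha, s, hs, h.symm⟩⟩

lemma levelAdj_mul (hs : s ∈ S) (ha : c ≤ height χ a) (has : c ≤ height χ (a * s)) :
    LevelAdj χ S c a (a * s) :=
  ⟨ha, has, s, hs, Or.inl rfl⟩

lemma levelAdj_mul_inv (hs : s ∈ S) (ha : c ≤ height χ a)
    (has : c ≤ height χ (a * s⁻¹)) :
    LevelAdj χ S c a (a * s⁻¹) :=
  ⟨ha, has, s, hs, Or.inr (by group)⟩

lemma reflTransGen_levelAdj_mono (hcd : c ≤ d) (h : ReflTransGen (LevelAdj χ S d) a b) :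
    ReflTransGen (LevelAdj χ S c) a b :=
  ReflTransGen.mono (fun _ _ ⟨hx, hy, hxy⟩ => ⟨hcd.trans hx, hcd.trans hy, hxy⟩) _ _ h

lemma reflTransGen_levelAdj_mul_left (v : G) (h : ReflTransGen (LevelAdj χ S c) a b) :
    ReflTransGen (LevelAdj χ S (height χ v + c)) (v * a) (v * b) := by
  refine ReflTransGen.lift (v * ·) (fun x y ⟨hx, hy, s, hs, hxy⟩ => ?_) _ _ h
  refine ⟨by simpa using hx, by simpa using hy, s, hs, ?_⟩
  rcases hxy with rfl | rfl <;> simp [mul_assoc]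

lemma exists_reflTransGen_levelAdj_one (hS : closure S = ⊤) (g : G) :
    ∃ c ≤ height χ g, ReflTransGen (LevelAdj χ S c) 1 g := by
  induction (hS ▸ mem_top g : g ∈ closure S) using closure_induction_right with
  | one => exact ⟨0, by simp, .refl⟩
  | mul_right x _ s hs ih =>
    obtain ⟨c, hcx, hc⟩ := ih
    exact ⟨min c (height χ (x * s)), min_le_right _ _,
      (reflTransGen_levelAdj_mono (min_le_left _ _) hc).tail
        (levelAdj_mul hs ((min_le_left _ _).trans hcx) (min_le_right _ _))⟩
  | mul_inv_cancel x _ s hs ih =>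
    obtain ⟨c, hcx, hc⟩ := ih
    exact ⟨min c (height χ (x * s⁻¹)), min_le_right _ _,
      (reflTransGen_levelAdj_mono (min_le_left _ _) hc).tail
        (levelAdj_mul_inv hs ((min_le_left _ _).trans hcx) (min_le_right _ _))⟩

end LevelAdj

def DipBounded (χ : G →* Multiplicative ℤ) (S : Set G) (c : ℤ) (g : G) : Prop :=
  ∀ v, ReflTransGen (LevelAdj χ S (height χ v - c)) v (v * g)

section DipBounded

variable {χ : G →* Multiplicative ℤ} {S : Set G} {c d : ℤ} {g g₁ g₂ : G}

lemma DipBounded.mono (hcd : c ≤ d) (h : DipBounded χ S c g) : DipBounded χ S d g :=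
  fun v => reflTransGen_levelAdj_mono (by linarith) (h v)

lemma dipBounded_one : DipBounded χ S c 1 := fun _ => by simpa using .refl

lemma DipBounded.mul (h₁ : DipBounded χ S c g₁) (h₂ : DipBounded χ S c g₂)
    (hg₁ : 0 ≤ height χ g₁) : DipBounded χ S c (g₁ * g₂) := fun v =>
  (h₁ v).trans <| by
    simpa [mul_assoc] using reflTransGen_levelAdj_mono (by simp; linarith) (h₂ (v * g₁))

lemma DipBounded.inv (h : DipBounded χ S c g) (hg : height χ g ≤ 0) :
    DipBounded χ S c g⁻¹ := fun v =>
  symm <| by simpa using reflTransGen_levelAdj_mono (by simp; linarith) (h (v * g⁻¹))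

lemma DipBounded.pow (h : DipBounded χ S c g) (hg : 0 ≤ height χ g) :
    ∀ n : ℕ, DipBounded χ S c (g ^ n)
  | 0 => by simpa using dipBounded_one
  | n + 1 => by
    rw [pow_succ]
    exact (h.pow hg n).mul h (by simp; positivity)

lemma exists_dipBounded (hS : closure S = ⊤) (g : G) : ∃ c, DipBounded χ S c g := by
  obtain ⟨c, -, hc⟩ := exists_reflTransGen_levelAdj_one (χ := χ) hS g
  exact ⟨-c, fun v => by simpa using reflTransGen_levelAdj_mul_left v hc⟩

lemma exists_dipBounded_of_finite (hS : closure S = ⊤) {A : Set G} (hA : A.Finite) :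
    ∃ c, ∀ g ∈ A, DipBounded χ S c g :=
  (hA.eventually_all.2 fun g _ =>
    let ⟨c, hc⟩ := exists_dipBounded (χ := χ) hS g
    eventually_atTop.2 ⟨c, fun _ hd => hc.mono hd⟩).exists

lemma dipBounded_of_mem_closure {A : Set G} (hAχ : closure A ≤ χ.ker)
    (hA : ∀ a ∈ A, DipBounded χ S c a) {n : G} (hn : n ∈ closure A) :
    DipBounded χ S c n := by
  induction hn using closure_induction with
  | mem a ha => exact hA a ha
  | one => exact dipBounded_one
  | mul x y hx _ ihx ihy => exact ihx.mul ihy (height_eq_zero_iff.2 (hAχ hx)).ge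
  | inv x hx ih => exact ih.inv (height_eq_zero_iff.2 (hAχ hx)).le

end DipBounded

section Forward

variable {χ : G →* Multiplicative ℤ} {S : Set G}

/-- Write `g = n * t ^ height χ g` with `n` in the finitely generated kernel and
`height χ t = 1`. -/
lemma exists_dipBounded_of_ker_fg (hχ : Function.Surjective χ) (hker : χ.ker.FG)
    (hS : closure S = ⊤) : ∃ c, ∀ g, 0 ≤ height χ g → DipBounded χ S c g := by
  obtain ⟨A, hA, hAfin⟩ := (fg_iff _).1 hker
  obtain ⟨t, ht⟩ := exists_height_eq_one hχ
  obtain ⟨c, hc⟩ := exists_dipBounded_of_finite (χ := χ) hS (hAfin.insert t)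
  refine ⟨c, fun g hg => ?_⟩
  obtain ⟨m, hm⟩ := Int.eq_ofNat_of_zero_le hg
  have hn : g * (t ^ m)⁻¹ ∈ closure A := by
    rw [hA, ← height_eq_zero_iff]
    simp [ht, hm]
  have hker_n := dipBounded_of_mem_closure hA.le (fun a ha => hc a (mem_insert_of_mem _ ha)) hn
  have hpow := (hc t (mem_insert _ _)).pow (by simp [ht]) m
  simpa using hker_n.mul hpow (by simp [ht, hm])

lemma exists_height_pos_dipBounded_zero (hχ : χ ≠ 1) (hS : closure S = ⊤) :
    ∃ g, 0 < height χ g ∧ DipBounded χ S 0 g := by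
  obtain ⟨s, hs, hs0⟩ : ∃ s ∈ S, height χ s ≠ 0 := by
    by_contra! h
    refine hχ (MonoidHom.ker_eq_top_iff.1 (eq_top_iff.2 ?_))
    exact hS ▸ (closure_le _).2 fun s hs => height_eq_zero_iff.1 (h s hs)
  rcases hs0.lt_or_gt with hneg | hpos
  · exact ⟨s⁻¹, by simpa using hneg,
      fun v => .single (levelAdj_mul_inv hs (by simp) (by simp; linarith))⟩
  · exact ⟨s, hpos, fun v => .single (levelAdj_mul hs (by simp) (by simp; linarith))⟩

/-- Climb from `x` and `y` along powers of a generator of positive height until high enough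
that the bounded dips of `exists_dipBounded_of_ker_fg` stay above height zero. -/
theorem reflTransGen_levelAdj_zero_of_ker_fg (hχ : Function.Surjective χ) (hker : χ.ker.FG)
    (hS : closure S = ⊤) {x y : G} (hx : 0 ≤ height χ x) (hy : 0 ≤ height χ y) :
    ReflTransGen (LevelAdj χ S 0) x y := by
  wlog hxy : height χ x ≤ height χ y generalizing x y
  · exact symm (this hy hx (le_of_not_ge hxy))
  obtain ⟨c, hc⟩ := exists_dipBounded_of_ker_fg hχ hker hS
  obtain ⟨g, hg, hg0⟩ := exists_height_pos_dipBounded_zero (ne_one_of_surjective hχ) hS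
  have climb : ∀ v, 0 ≤ height χ v → ReflTransGen (LevelAdj χ S 0) v (v * g ^ c.toNat) :=
    fun v hv => reflTransGen_levelAdj_mono (by simpa using hv) (hg0.pow hg.le _ v)
  have high : c ≤ height χ (x * g ^ c.toNat) := by
    have : (c.toNat : ℤ) ≤ c.toNat * height χ g := le_mul_of_one_le_right (by positivity) hg
    simp only [height_mul, height_pow]
    linarith [Int.self_le_toNat c]
  have cross := hc ((x * g ^ c.toNat)⁻¹ * (y * g ^ c.toNat)) (by simp; linarith)
    (x * g ^ c.toNat)
  rw [mul_inv_cancel_left] at cross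
  exact (climb x hx).trans ((reflTransGen_levelAdj_mono (by linarith) cross).trans
    (symm (climb y hy)))

end Forward

def conjPowers (t : G) (F : Set G) (J : Set ℕ) : Set G :=
  image2 (fun x j => t ^ j * x * (t ^ j)⁻¹) F J

def kerPart (χ : G →* Multiplicative ℤ) (t x : G) : G := x * t ^ (-height χ x)

lemma kerPart_mem_ker {χ : G →* Multiplicative ℤ} {t : G} (ht : height χ t = 1) (x : G) :
    kerPart χ t x ∈ χ.ker := by
  rw [← height_eq_zero_iff]
  simp [kerPart, ht]

lemma kerPart_hom_inv (χ : G →* Multiplicative ℤ) (t : G) :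
    kerPart χ⁻¹ t⁻¹ = kerPart χ t := by
  funext x
  simp [kerPart, inv_zpow']

/-- Along an edge `a — a * s`, the element `a * t ^ (-height χ a)` gets multiplied by the
conjugate of `kerPart χ t s` by `t ^ height χ a`, a nonnegative power in the half-space. -/
lemma mul_zpow_neg_height_mem_closure {χ : G →* Multiplicative ℤ} {S : Set G} {t v : G}
    (hv : ReflTransGen (LevelAdj χ S 0) 1 v) :
    v * t ^ (-height χ v) ∈ closure (conjPowers t (kerPart χ t '' S) univ) := by
  induction hv with
  | refl => simp
  | @tail a b _ hab ih =>
    obtain ⟨ha, hb, s, hs, h⟩ := hab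
    have hgen (j : ℕ) :
        t ^ j * kerPart χ t s * (t ^ j)⁻¹ ∈ closure (conjPowers t (kerPart χ t '' S) univ) :=
      subset_closure (mem_image2_of_mem (mem_image_of_mem _ hs) (mem_univ j))
    rcases h with rfl | rfl
    · obtain ⟨j, hj⟩ := Int.eq_ofNat_of_zero_le ha
      convert mul_mem ih (hgen j) using 1
      rw [kerPart, ← zpow_natCast, ← hj]
      simp only [height_mul]
      group
    · obtain ⟨j, hj⟩ := Int.eq_ofNat_of_zero_le hb
      convert mul_mem ih (inv_mem (hgen j)) using 1
      rw [kerPart, ← zpow_natCast, ← hj]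
      simp only [height_mul]
      group

lemma conjPowers_subset {N : Subgroup G} [N.Normal] (t : G) {F : Set G} (hF : F ⊆ N)
    (J : Set ℕ) : conjPowers t F J ⊆ N := by
  rintro _ ⟨x, hx, j, -, rfl⟩
  exact Normal.conj_mem ‹_› x (hF hx) _

/-- The subgroups `P k` generated by the conjugates with exponent at most `k` exhaust `N`, so one
of them contains the finitely many `t⁻¹ * x * t`; that `P k` is then stable under conjugation
by `t⁻¹`, hence contains all conjugates by negative powers of `t`, hence all of `N`. -/
theorem fg_of_le_closure_conjPowers {N : Subgroup G} [N.Normal] {F : Set G} (hF : F.Finite)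
    (hFN : F ⊆ N) {t : G} (hpos : N ≤ closure (conjPowers t F univ))
    (hneg : N ≤ closure (conjPowers t⁻¹ F univ)) : N.FG := by
  set P : ℕ → Subgroup G := fun k => closure (conjPowers t F (Iic k))
  have hP_mono : Monotone P := fun k l hkl =>
    closure_mono (image2_subset_left (Iic_subset_Iic.2 hkl))
  have hN_iSup : N ≤ ⨆ k, P k := hpos.trans <| (closure_le _).2 <| by
    rintro _ ⟨x, hx, j, -, rfl⟩
    exact le_iSup P j (subset_closure ⟨x, hx, j, le_refl j, rfl⟩)
  obtain ⟨k, hk⟩ : ∃ k, ∀ x ∈ F, t⁻¹ * x * t ∈ P k := by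
    refine (hF.eventually_all.2 fun x hx => ?_).exists (f := atTop)
    have hmem : t⁻¹ * x * t ∈ N := by simpa using Normal.conj_mem ‹_› x (hFN hx) t⁻¹
    obtain ⟨k, hk⟩ := (mem_iSup_of_directed hP_mono.directed_le).1 (hN_iSup hmem)
    exact eventually_atTop.2 ⟨k, fun l hl => hP_mono hl hk⟩
  have hconj : ∀ g ∈ P k, t⁻¹ * g * t ∈ P k := by
    intro g hg
    induction hg using closure_induction with
    | mem _ hg =>
      obtain ⟨x, hx, j, hj, rfl⟩ := hg
      rcases j with _ | j
      · simpa using hk x hx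
      · refine subset_closure ⟨x, hx, j, (Nat.le_succ j).trans hj, ?_⟩
        simp only [pow_succ]
        group
    | one => simp
    | mul a b _ _ ha hb => simpa [mul_assoc] using mul_mem ha hb
    | inv a _ ha => simpa [mul_assoc] using inv_mem ha
  have hconj_pow : ∀ j : ℕ, ∀ g ∈ P k, t⁻¹ ^ j * g * (t⁻¹ ^ j)⁻¹ ∈ P k := by
    intro j
    induction j with
    | zero => simp
    | succ j ih =>
      intro g hg
      convert ih _ (hconj g hg) using 1
      simp only [pow_succ]
      group
  have hN : N = P k := by
    refine le_antisymm (hneg.trans ((closure_le _).2 ?_))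
      ((closure_le _).2 (conjPowers_subset t hFN _))
    rintro _ ⟨x, hx, j, -, rfl⟩
    exact hconj_pow j x (subset_closure ⟨x, hx, 0, Nat.zero_le k, by simp⟩)
  exact hN ▸ (fg_iff _).2 ⟨_, rfl, hF.image2 _ (finite_Iic k)⟩

lemma inSigma1_height_iff {χ : G →* Multiplicative ℤ} :
    InSigma1 (fun g => (height χ g : ℝ)) ↔
      χ ≠ 1 ∧ ∀ S : Finset G, closure (S : Set G) = ⊤ →
      ∀ x y, 0 ≤ height χ x → 0 ≤ height χ y → ReflTransGen (LevelAdj χ S 0) x y := by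
  have hne : (fun g => (height χ g : ℝ)) ≠ (fun _ => 0) ↔ χ ≠ 1 := by
    simp [funext_iff, MonoidHom.ext_iff, height]
  simp only [InSigma1, IsChar, hne, height_mul, Int.cast_add, Int.cast_nonneg_iff, implies_true,
    true_and]
  rfl

theorem inSigma1_of_ker_fg {χ : G →* Multiplicative ℤ} (hχ : Function.Surjective χ)
    (hker : χ.ker.FG) : InSigma1 (fun g => (height χ g : ℝ)) :=
  inSigma1_height_iff.2 ⟨ne_one_of_surjective hχ, fun _ hS _ _ hx hy =>
    reflTransGen_levelAdj_zero_of_ker_fg hχ hker hS hx hy⟩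

theorem ker_fg_of_inSigma1 (hG : Group.FG G) {χ : G →* Multiplicative ℤ}
    (hχ : Function.Surjective χ) (hpos : InSigma1 (fun g => (height χ g : ℝ)))
    (hneg : InSigma1 (fun g => (height χ⁻¹ g : ℝ))) : χ.ker.FG := by
  obtain ⟨S, hS⟩ := hG.out
  obtain ⟨t, ht⟩ := exists_height_eq_one hχ
  refine fg_of_le_closure_conjPowers (t := t) (S.finite_toSet.image _)
    (image_subset_iff.2 fun x _ => kerPart_mem_ker ht x) (fun n hn => ?_) (fun n hn => ?_)
  · have hn0 := height_eq_zero_iff.2 hn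
    simpa [hn0] using mul_zpow_neg_height_mem_closure (t := t)
      ((inSigma1_height_iff.1 hpos).2 S hS 1 n (by simp) hn0.ge)
  · have hn0 : height χ⁻¹ n = 0 := by simpa using height_eq_zero_iff.2 hn
    simpa [hn0, kerPart_hom_inv] using mul_zpow_neg_height_mem_closure (t := t⁻¹)
      ((inSigma1_height_iff.1 hneg).2 S hS 1 n (by simp) hn0.ge)

end BNS

open BNS

/-- BNS fibration criterion: for a finitely generated group `G` and an
epimorphism `χ : G → ℤ`, the kernel of `χ` is finitely generated iff both `[χ]` and
`[−χ]` lie in `Σ¹(G)`. -/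
theorem stmt19 {G : Type*} [Group G] (hG : Group.FG G)
    (χ : G →* Multiplicative ℤ) (hχ : Function.Surjective χ) :
    χ.ker.FG ↔
      (InSigma1 (fun g => ((Multiplicative.toAdd (χ g) : ℤ) : ℝ)) ∧
        InSigma1 (fun g => -((Multiplicative.toAdd (χ g) : ℤ) : ℝ))) := by
  have hneg_eq : (fun g => -((Multiplicative.toAdd (χ g) : ℤ) : ℝ)) =
      fun g => (height χ⁻¹ g : ℝ) := by
    funext g
    simp [height]
  have hχ_inv : Function.Surjective ⇑χ⁻¹ := fun z =>
    (hχ z⁻¹).imp fun g hg => by simp [hg]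
  have hker_inv : χ⁻¹.ker = χ.ker := by
    ext g
    simp
  rw [hneg_eq]
  exact ⟨fun hker =>
      ⟨inSigma1_of_ker_fg hχ hker, inSigma1_of_ker_fg hχ_inv (hker_inv ▸ hker)⟩,
    fun ⟨hpos, hneg⟩ => ker_fg_of_inSigma1 hG hχ hpos hneg⟩
end
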